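/- Let γ ∈ (0,1) and let π̂ : ℝⁿ → ℝᵐ be Lipschitz with constant ℓ_{π̂}. Fix δ ∈ ℝⁿ with ‖δ‖ ≤ ζ and define π̂_δ(x) = π̂(x + δ). Assume the closed-loop maps f_{π̂} and f_{π̂_δ} map B_r(0) into itself, that V^{π̂} and V^{π̂_δ} are well defined and bounded on B_r(0), that c is Lipschitz in the control with constant ℓ_c^u, that f is Lipschitz in the control with constant ℓ_f^u, and that V^{π̂} is Lipschitz on B_r(0) with constant ℓ_{V^{π̂}}. Then for every x ∈ B_r(0) the one-step robustness decomposition holds: V^{π̂_δ}(x) − V^{π̂}(x) ≤ ℓ_c^u ℓ_{π̂} ζ + γ · sup_{z ∈ B_r(0)} ( V^{π̂_δ}(z) − V^{π̂}(z) ) + γ ℓ_{V^{π̂}} ℓ_f^u ℓ_{π̂} ζ. -/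

import Mathlib

/-!
Unrolling both value functions by one Bellman step, `V^{π̂_δ}(x) - V^{π̂}(x)` splits into the
stage-cost gap at `x`, `γ` times the value gap at the perturbed successor (bounded by the supremum
over the invariant ball), and `γ` times the change of `V^{π̂}` between the two successors. The
control gap `‖π̂(x + δ) - π̂(x)‖ ≤ ℓ_π̂ ζ` bounds the first term through the Lipschitz constant of
`c`, and the third through those of `f` and `V^{π̂}`.
-/

open Metric

/-- The closed-loop map `f_π(x) = f(x, π(x))`. -/
def cloop {E U : Type*} (f : E → U → E) (π : E → U) : E → E := fun x => f x (π x)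

/-- The discounted value function `V^π(x) = ∑_t γ^t c(f_π^t(x), π(f_π^t(x)))`. -/
noncomputable def Vval {E U : Type*} (f : E → U → E) (c : E → U → ℝ) (γ : ℝ)
    (π : E → U) (x : E) : ℝ :=
  ∑' t : ℕ, γ ^ t * c ((cloop f π)^[t] x) (π ((cloop f π)^[t] x))

section ValueFunction

variable {E U : Type*} (f : E → U → E) (c : E → U → ℝ) (γ : ℝ)

theorem Vval_eq_add_mul_Vval_cloop (π : E → U) (x : E)
    (h : Summable fun t : ℕ => γ ^ t * c ((cloop f π)^[t] x) (π ((cloop f π)^[t] x))) :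
    Vval f c γ π x = c x (π x) + γ * Vval f c γ π (cloop f π x) := by
  unfold Vval
  rw [h.tsum_eq_zero_add, ← tsum_mul_left]
  simp only [pow_zero, one_mul, Function.iterate_zero_apply, Function.iterate_succ_apply,
    pow_succ', mul_assoc]

theorem Vval_sub_Vval_eq_one_step (π π' : E → U) (x : E)
    (h : Summable fun t : ℕ => γ ^ t * c ((cloop f π)^[t] x) (π ((cloop f π)^[t] x)))
    (h' : Summable fun t : ℕ => γ ^ t * c ((cloop f π')^[t] x) (π' ((cloop f π')^[t] x))) :
    Vval f c γ π' x - Vval f c γ π x =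
      (c x (π' x) - c x (π x))
        + γ * (Vval f c γ π' (cloop f π' x) - Vval f c γ π (cloop f π' x))
        + γ * (Vval f c γ π (cloop f π' x) - Vval f c γ π (cloop f π x)) := by
  rw [Vval_eq_add_mul_Vval_cloop f c γ π x h, Vval_eq_add_mul_Vval_cloop f c γ π' x h']
  ring

end ValueFunction

theorem bddAbove_image_sub_of_abs_le {α : Type*} {s : Set α} {g h : α → ℝ}
    (hg : ∃ M, ∀ x ∈ s, |g x| ≤ M) (hh : ∃ M, ∀ x ∈ s, |h x| ≤ M) :
    BddAbove ((fun x => g x - h x) '' s) := by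
  obtain ⟨M, hM⟩ := hg
  obtain ⟨M', hM'⟩ := hh
  refine ⟨M + M', ?_⟩
  rintro _ ⟨x, hx, rfl⟩
  linarith [(abs_le.mp (hM x hx)).2, (abs_le.mp (hM' x hx)).1]

theorem norm_apply_add_sub_apply_le {E F : Type*} [SeminormedAddCommGroup E] [SeminormedAddGroup F]
    {g : E → F} {ℓ ζ : ℝ} (hg : ∀ x y, ‖g x - g y‖ ≤ ℓ * ‖x - y‖) (hℓ : 0 ≤ ℓ)
    {δ : E} (hδ : ‖δ‖ ≤ ζ) (x : E) :
    ‖g (x + δ) - g x‖ ≤ ℓ * ζ :=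
  calc ‖g (x + δ) - g x‖ ≤ ℓ * ‖x + δ - x‖ := hg _ _
    _ = ℓ * ‖δ‖ := by rw [add_sub_cancel_left]
    _ ≤ ℓ * ζ := by gcongr

theorem one_step_robustness_decomposition_general {n m : ℕ}
    (f : EuclideanSpace ℝ (Fin n) → EuclideanSpace ℝ (Fin m) → EuclideanSpace ℝ (Fin n))
    (c : EuclideanSpace ℝ (Fin n) → EuclideanSpace ℝ (Fin m) → ℝ)
    (γ : ℝ) (hγ : γ ∈ Set.Ioo (0 : ℝ) 1)
    (r ζ : ℝ)
    (πhat : EuclideanSpace ℝ (Fin n) → EuclideanSpace ℝ (Fin m))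
    (ℓπ : ℝ) (hℓπ : 0 ≤ ℓπ)
    (hπhat_lip : ∀ x y, ‖πhat x - πhat y‖ ≤ ℓπ * ‖x - y‖)
    (δ : EuclideanSpace ℝ (Fin n)) (hδ : ‖δ‖ ≤ ζ)
    (hinv : ∀ x ∈ closedBall (0 : EuclideanSpace ℝ (Fin n)) r,
      cloop f πhat x ∈ closedBall (0 : EuclideanSpace ℝ (Fin n)) r)
    (hinv_pert : ∀ x ∈ closedBall (0 : EuclideanSpace ℝ (Fin n)) r,
      cloop f (fun z => πhat (z + δ)) x ∈ closedBall (0 : EuclideanSpace ℝ (Fin n)) r)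
    (hsum : ∀ x ∈ closedBall (0 : EuclideanSpace ℝ (Fin n)) r,
      Summable fun t : ℕ => γ ^ t * c ((cloop f πhat)^[t] x) (πhat ((cloop f πhat)^[t] x)))
    (hsum_pert : ∀ x ∈ closedBall (0 : EuclideanSpace ℝ (Fin n)) r,
      Summable fun t : ℕ => γ ^ t *
        c ((cloop f (fun z => πhat (z + δ)))^[t] x)
          (πhat ((cloop f (fun z => πhat (z + δ)))^[t] x + δ)))
    (hbdd : ∃ M : ℝ, ∀ x ∈ closedBall (0 : EuclideanSpace ℝ (Fin n)) r,
      |Vval f c γ πhat x| ≤ M)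
    (hbdd_pert : ∃ M : ℝ, ∀ x ∈ closedBall (0 : EuclideanSpace ℝ (Fin n)) r,
      |Vval f c γ (fun z => πhat (z + δ)) x| ≤ M)
    (ℓcu ℓfu ℓV : ℝ) (hℓcu : 0 ≤ ℓcu) (hℓfu : 0 ≤ ℓfu) (hℓV : 0 ≤ ℓV)
    (hc_lip : ∀ x u₁ u₂, |c x u₁ - c x u₂| ≤ ℓcu * ‖u₁ - u₂‖)
    (hf_lip : ∀ x u₁ u₂, ‖f x u₁ - f x u₂‖ ≤ ℓfu * ‖u₁ - u₂‖)
    (hV_lip : ∀ x ∈ closedBall (0 : EuclideanSpace ℝ (Fin n)) r,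
      ∀ y ∈ closedBall (0 : EuclideanSpace ℝ (Fin n)) r,
        |Vval f c γ πhat x - Vval f c γ πhat y| ≤ ℓV * ‖x - y‖) :
    ∀ x ∈ closedBall (0 : EuclideanSpace ℝ (Fin n)) r,
      Vval f c γ (fun z => πhat (z + δ)) x - Vval f c γ πhat x
        ≤ ℓcu * ℓπ * ζ
          + γ * sSup ((fun z => Vval f c γ (fun w => πhat (w + δ)) z - Vval f c γ πhat z) ''
              closedBall (0 : EuclideanSpace ℝ (Fin n)) r)
          + γ * ℓV * ℓfu * ℓπ * ζ := by
  intro x hx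
  set πδ := fun z => πhat (z + δ)
  have hγ0 : 0 ≤ γ := hγ.1.le
  have hu : ‖πδ x - πhat x‖ ≤ ℓπ * ζ := norm_apply_add_sub_apply_le hπhat_lip hℓπ hδ x
  have hcost : c x (πδ x) - c x (πhat x) ≤ ℓcu * (ℓπ * ζ) :=
    (le_abs_self _).trans ((hc_lip _ _ _).trans (by gcongr))
  have hstate : ‖cloop f πδ x - cloop f πhat x‖ ≤ ℓfu * (ℓπ * ζ) :=
    (hf_lip _ _ _).trans (by gcongr)
  have hshift : Vval f c γ πhat (cloop f πδ x) - Vval f c γ πhat (cloop f πhat x)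
      ≤ ℓV * (ℓfu * (ℓπ * ζ)) :=
    (le_abs_self _).trans ((hV_lip _ (hinv_pert x hx) _ (hinv x hx)).trans (by gcongr))
  have hsup : Vval f c γ πδ (cloop f πδ x) - Vval f c γ πhat (cloop f πδ x)
      ≤ sSup ((fun z => Vval f c γ πδ z - Vval f c γ πhat z) '' closedBall 0 r) :=
    le_csSup (bddAbove_image_sub_of_abs_le hbdd_pert hbdd) ⟨_, hinv_pert x hx, rfl⟩
  calc _ = _ := Vval_sub_Vval_eq_one_step f c γ πhat πδ x (hsum x hx) (hsum_pert x hx)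
    _ ≤ ℓcu * (ℓπ * ζ) + γ * sSup ((fun z => Vval f c γ πδ z - Vval f c γ πhat z) ''
          closedBall 0 r) + γ * (ℓV * (ℓfu * (ℓπ * ζ))) := by gcongr
    _ = _ := by ring

theorem one_step_robustness_decomposition {n m : ℕ}
    (f : EuclideanSpace ℝ (Fin n) → EuclideanSpace ℝ (Fin m) → EuclideanSpace ℝ (Fin n))
    (c : EuclideanSpace ℝ (Fin n) → EuclideanSpace ℝ (Fin m) → ℝ)
    (hc_nonneg : ∀ x u, 0 ≤ c x u)
    (γ : ℝ) (hγ : γ ∈ Set.Ioo (0 : ℝ) 1)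
    (r ζ : ℝ) (hζ : 0 ≤ ζ)
    (πhat : EuclideanSpace ℝ (Fin n) → EuclideanSpace ℝ (Fin m))
    (ℓπ : ℝ) (hℓπ : 0 ≤ ℓπ)
    (hπhat_lip : ∀ x y, ‖πhat x - πhat y‖ ≤ ℓπ * ‖x - y‖)
    (δ : EuclideanSpace ℝ (Fin n)) (hδ : ‖δ‖ ≤ ζ)
    (hinv : ∀ x ∈ closedBall (0 : EuclideanSpace ℝ (Fin n)) r,
      cloop f πhat x ∈ closedBall (0 : EuclideanSpace ℝ (Fin n)) r)
    (hinv_pert : ∀ x ∈ closedBall (0 : EuclideanSpace ℝ (Fin n)) r,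
      cloop f (fun z => πhat (z + δ)) x ∈ closedBall (0 : EuclideanSpace ℝ (Fin n)) r)
    (hsum : ∀ x ∈ closedBall (0 : EuclideanSpace ℝ (Fin n)) r,
      Summable fun t : ℕ => γ ^ t * c ((cloop f πhat)^[t] x) (πhat ((cloop f πhat)^[t] x)))
    (hsum_pert : ∀ x ∈ closedBall (0 : EuclideanSpace ℝ (Fin n)) r,
      Summable fun t : ℕ => γ ^ t *
        c ((cloop f (fun z => πhat (z + δ)))^[t] x)
          (πhat ((cloop f (fun z => πhat (z + δ)))^[t] x + δ)))
    (hbdd : ∃ M : ℝ, ∀ x ∈ closedBall (0 : EuclideanSpace ℝ (Fin n)) r,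
      |Vval f c γ πhat x| ≤ M)
    (hbdd_pert : ∃ M : ℝ, ∀ x ∈ closedBall (0 : EuclideanSpace ℝ (Fin n)) r,
      |Vval f c γ (fun z => πhat (z + δ)) x| ≤ M)
    (ℓcu ℓfu ℓV : ℝ) (hℓcu : 0 ≤ ℓcu) (hℓfu : 0 ≤ ℓfu) (hℓV : 0 ≤ ℓV)
    (hc_lip : ∀ x u₁ u₂, |c x u₁ - c x u₂| ≤ ℓcu * ‖u₁ - u₂‖)
    (hf_lip : ∀ x u₁ u₂, ‖f x u₁ - f x u₂‖ ≤ ℓfu * ‖u₁ - u₂‖)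
    (hV_lip : ∀ x ∈ closedBall (0 : EuclideanSpace ℝ (Fin n)) r,
      ∀ y ∈ closedBall (0 : EuclideanSpace ℝ (Fin n)) r,
        |Vval f c γ πhat x - Vval f c γ πhat y| ≤ ℓV * ‖x - y‖) :
    ∀ x ∈ closedBall (0 : EuclideanSpace ℝ (Fin n)) r,
      Vval f c γ (fun z => πhat (z + δ)) x - Vval f c γ πhat x
        ≤ ℓcu * ℓπ * ζ
          + γ * sSup ((fun z => Vval f c γ (fun w => πhat (w + δ)) z - Vval f c γ πhat z) ''
              closedBall (0 : EuclideanSpace ℝ (Fin n)) r)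
          + γ * ℓV * ℓfu * ℓπ * ζ :=
  one_step_robustness_decomposition_general f c γ hγ r ζ πhat ℓπ hℓπ hπhat_lip δ hδ hinv hinv_pert
    hsum hsum_pert hbdd hbdd_pert ℓcu ℓfu ℓV hℓcu hℓfu hℓV hc_lip hf_lip hV_lip
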